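/- Let F(a, z) be the generalized polynomial of class P(N, α) as above and a, a′ two admissible coefficient vectors, s = α_N + 2. Then for all x, y ∈ ℝ^d: |F(a,|x|)x − F(a′,|y|)y| ≤ C₁(1 + |x| + |y|)^{s−2+α} |x − y|^{1−α} + C₂(1 + |x| + |y|)^{s−1} |a − a′|, with C₁ = 2(s−1)/(1−α) (up to a factor depending on N and a^*) and C₂ = 3N. -/

import Mathlib

/-!
Write `F(a,|x|)x − F(a',|y|)y = (F(a,|x|)x − F(a,|y|)y) + F(a − a',|y|)y`. The second term is at
most `(N + 2)(1 + |y|)^{s-1}|a − a'|`. In the first, each monomial `|z|^β z` with `β ≥ 0` moves by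
at most `(1 + 2β)(1 + |x| + |y|)^β |x − y|`, while `|z|^{-α} z` is globally `(1 − α)`-Hölder with
constant `4`; both follow from
`|x|^p x − |y|^p y = |x|^p (x − y) + (|x|^p − |y|^p) y` and the mean value theorem for `r ↦ r^p`.
The interpolation `|x − y| ≤ (1 + |x| + |y|)^α |x − y|^{1-α}` then puts everything on the scale
`(1 + |x| + |y|)^{s-2+α} |x − y|^{1-α}`.
-/

open Real Finset

theorem abs_rpow_sub_rpow_le {p u t : ℝ} (hu : 0 < u) (hut : u ≤ t) :
    |t ^ p - u ^ p| ≤ |p| * (u ^ (p - 1) + t ^ (p - 1)) * (t - u) := by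
  have hderiv_le : ∀ r ∈ Set.Icc u t, ‖p * r ^ (p - 1)‖ ≤ |p| * (u ^ (p - 1) + t ^ (p - 1)) := by
    intro r ⟨hur, hrt⟩
    have hr : 0 < r := hu.trans_le hur
    rw [norm_mul, Real.norm_eq_abs, Real.norm_of_nonneg (rpow_nonneg hr.le _)]
    gcongr
    rcases le_total 0 (p - 1) with h | h
    · linarith [rpow_le_rpow hr.le hrt h, rpow_nonneg hu.le (p - 1)]
    · linarith [rpow_le_rpow_of_nonpos hu hur h, rpow_nonneg (hu.trans_le hut).le (p - 1)]
  have := (convex_Icc u t).norm_image_sub_le_of_norm_hasDerivWithin_le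
    (fun r hr => (hasDerivAt_rpow_const (Or.inl (hu.trans_le hr.1).ne')).hasDerivWithinAt)
    hderiv_le (Set.left_mem_Icc.2 hut) (Set.right_mem_Icc.2 hut)
  simpa [Real.norm_eq_abs, abs_of_nonneg (sub_nonneg.2 hut)] using this

theorem rpow_sub_rpow_mul_le {β u t : ℝ} (hβ : 0 ≤ β) (hu : 0 ≤ u) (hut : u ≤ t) :
    (t ^ β - u ^ β) * u ≤ 2 * β * t ^ β * (t - u) := by
  rcases hu.eq_or_lt with rfl | hu
  · simp only [mul_zero, sub_zero]
    have := rpow_nonneg hut β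
    positivity
  have ht : 0 < t := hu.trans_le hut
  have hmvt := abs_rpow_sub_rpow_le (p := β) hu hut
  rw [abs_of_nonneg (sub_nonneg.2 (rpow_le_rpow hu.le hut hβ)), abs_of_nonneg hβ] at hmvt
  have hu_pow : u ^ (β - 1) * u ≤ t ^ β := by
    rw [← rpow_add_one hu.ne', sub_add_cancel]
    exact rpow_le_rpow hu.le hut hβ
  have ht_pow : t ^ (β - 1) * u ≤ t ^ β := by
    calc t ^ (β - 1) * u ≤ t ^ (β - 1) * t := by gcongr
      _ = t ^ β := by rw [← rpow_add_one ht.ne', sub_add_cancel]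
  calc (t ^ β - u ^ β) * u ≤ β * (u ^ (β - 1) + t ^ (β - 1)) * (t - u) * u := by gcongr
    _ = β * (u ^ (β - 1) * u + t ^ (β - 1) * u) * (t - u) := by ring
    _ ≤ β * (t ^ β + t ^ β) * (t - u) := by gcongr
    _ = 2 * β * t ^ β * (t - u) := by ring

theorem rpow_neg_mul_le {α t D k : ℝ} (hα : 0 ≤ α) (ht : 0 < t) (hD : 0 ≤ D) (hDt : D ≤ k * t) :
    t ^ (-α) * D ≤ k ^ α * D ^ (1 - α) := by
  have hsplit : D = D ^ α * D ^ (1 - α) := by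
    rw [← rpow_add' hD (by norm_num), add_sub_cancel, rpow_one]
  have hratio : t ^ (-α) * D ^ α = (D / t) ^ α := by
    rw [div_rpow hD ht.le, rpow_neg ht.le, inv_mul_eq_div]
  calc t ^ (-α) * D = (D / t) ^ α * D ^ (1 - α) := by
        conv_lhs => rw [hsplit]
        rw [← mul_assoc, hratio]
    _ ≤ k ^ α * D ^ (1 - α) := by
        gcongr
        rwa [div_le_iff₀ ht]

theorem abs_rpow_neg_sub_rpow_neg_mul_le {α u t D : ℝ} (hα0 : 0 < α) (hα1 : α ≤ 1) (hu : 0 ≤ u)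
    (hut : u ≤ t) (htuD : t - u ≤ D) :
    |t ^ (-α) - u ^ (-α)| * u ≤ 2 * D ^ (1 - α) := by
  have hD : 0 ≤ D := (sub_nonneg.2 hut).trans htuD
  have hD_pow := rpow_nonneg hD (1 - α)
  rcases hu.eq_or_lt with rfl | hu
  · simp only [mul_zero]; positivity
  have ht : 0 < t := hu.trans_le hut
  rw [abs_sub_comm, abs_of_nonneg (sub_nonneg.2 (rpow_le_rpow_of_nonpos hu hut (by linarith)))]
  rcases le_or_gt u D with huD | hDu
  · -- small `u`: the difference is dominated by its first term
    calc (u ^ (-α) - t ^ (-α)) * u ≤ u ^ (-α) * u := by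
          gcongr; linarith [rpow_nonneg ht.le (-α)]
      _ = u ^ (1 - α) := by rw [← rpow_add_one hu.ne']; ring_nf
      _ ≤ D ^ (1 - α) := rpow_le_rpow hu.le huD (by linarith)
      _ ≤ 2 * D ^ (1 - α) := by linarith
  · -- large `u`: mean value theorem, the derivative being largest at `u`
    have hmvt := abs_rpow_sub_rpow_le (p := -α) hu hut
    rw [abs_sub_comm, abs_of_nonneg (sub_nonneg.2 (rpow_le_rpow_of_nonpos hu hut (by linarith))),
      abs_neg, abs_of_pos hα0] at hmvt
    have ht_pow : t ^ (-α - 1) ≤ u ^ (-α - 1) := rpow_le_rpow_of_nonpos hu hut (by linarith)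
    calc (u ^ (-α) - t ^ (-α)) * u ≤ α * (u ^ (-α - 1) + t ^ (-α - 1)) * (t - u) * u := by
          gcongr
      _ ≤ α * (u ^ (-α - 1) + u ^ (-α - 1)) * D * u := by gcongr
      _ = 2 * α * ((u ^ (-α - 1) * u) * D) := by ring
      _ = 2 * α * (u ^ (-α) * D) := by rw [← rpow_add_one hu.ne', sub_add_cancel]
      _ ≤ 2 * α * ((1 : ℝ) ^ α * D ^ (1 - α)) := by
          gcongr _ * ?_
          exact rpow_neg_mul_le hα0.le hu hD (by rw [one_mul]; exact hDu.le)
      _ ≤ 2 * D ^ (1 - α) := by rw [one_rpow, one_mul]; gcongr; linarith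

theorem rpow_mul_le_rpow_of_le {u R p q : ℝ} (hu : 0 ≤ u) (huR : u ≤ R) (hR : 1 ≤ R)
    (hp : 0 ≤ p + 1) (hpq : p + 1 ≤ q) : u ^ p * u ≤ R ^ q := by
  rcases hu.eq_or_lt with rfl | hu
  · rw [mul_zero]; exact rpow_nonneg (by linarith) q
  calc u ^ p * u = u ^ (p + 1) := (rpow_add_one hu.ne' p).symm
    _ ≤ R ^ (p + 1) := rpow_le_rpow hu.le huR hp
    _ ≤ R ^ q := rpow_le_rpow_of_exponent_le hR hpq

theorem rpow_mul_le_rpow_add_mul_rpow {R D α β γ : ℝ} (hR : 1 ≤ R) (hD : 0 ≤ D) (hDR : D ≤ R)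
    (hα : 0 ≤ α) (hβγ : β ≤ γ) : R ^ β * D ≤ R ^ (γ + α) * D ^ (1 - α) := by
  have hsplit : D = D ^ α * D ^ (1 - α) := by
    rw [← rpow_add' hD (by norm_num), add_sub_cancel, rpow_one]
  calc R ^ β * D = R ^ β * D ^ α * D ^ (1 - α) := by rw [mul_assoc, ← hsplit]
    _ ≤ R ^ γ * R ^ α * D ^ (1 - α) := by gcongr
    _ = R ^ (γ + α) * D ^ (1 - α) := by rw [rpow_add (by linarith)]

section
variable {E : Type*} [NormedAddCommGroup E] [NormedSpace ℝ E]

theorem norm_smul_sub_smul_le (a b : ℝ) (x y : E) :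
    ‖a • x - b • y‖ ≤ |a| * ‖x - y‖ + |a - b| * ‖y‖ := by
  calc ‖a • x - b • y‖ = ‖a • (x - y) + (a - b) • y‖ := by
        congr 1; simp only [smul_sub, sub_smul]; abel
    _ ≤ |a| * ‖x - y‖ + |a - b| * ‖y‖ := by
        simpa only [norm_smul, Real.norm_eq_abs] using norm_add_le (a • (x - y)) ((a - b) • y)

theorem norm_rpow_smul_sub_rpow_smul_le_of_norm_le {β : ℝ} (hβ : 0 ≤ β) {x y : E}
    (hxy : ‖y‖ ≤ ‖x‖) : ‖‖x‖ ^ β • x - ‖y‖ ^ β • y‖ ≤ (1 + 2 * β) * ‖x‖ ^ β * ‖x - y‖ := by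
  have hpow := rpow_nonneg (norm_nonneg x) β
  calc ‖‖x‖ ^ β • x - ‖y‖ ^ β • y‖
      ≤ ‖x‖ ^ β * ‖x - y‖ + (‖x‖ ^ β - ‖y‖ ^ β) * ‖y‖ := by
        have := norm_smul_sub_smul_le (‖x‖ ^ β) (‖y‖ ^ β) x y
        rwa [abs_of_nonneg hpow,
          abs_of_nonneg (sub_nonneg.2 (rpow_le_rpow (norm_nonneg y) hxy hβ))] at this
    _ ≤ ‖x‖ ^ β * ‖x - y‖ + 2 * β * ‖x‖ ^ β * ‖x - y‖ := by
        have := norm_sub_norm_le x y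
        gcongr ‖x‖ ^ β * ‖x - y‖ + ?_
        exact (rpow_sub_rpow_mul_le hβ (norm_nonneg y) hxy).trans (by gcongr)
    _ = (1 + 2 * β) * ‖x‖ ^ β * ‖x - y‖ := by ring

theorem norm_rpow_smul_sub_rpow_smul_le {β : ℝ} (hβ : 0 ≤ β) (x y : E) :
    ‖‖x‖ ^ β • x - ‖y‖ ^ β • y‖ ≤ (1 + 2 * β) * max ‖x‖ ‖y‖ ^ β * ‖x - y‖ := by
  rcases le_total ‖y‖ ‖x‖ with hxy | hxy
  · rw [max_eq_left hxy]; exact norm_rpow_smul_sub_rpow_smul_le_of_norm_le hβ hxy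
  · rw [max_eq_right hxy, norm_sub_rev, norm_sub_rev x]
    exact norm_rpow_smul_sub_rpow_smul_le_of_norm_le hβ hxy

theorem norm_rpow_neg_smul_sub_rpow_neg_smul_le_of_norm_le {α : ℝ} (hα0 : 0 < α) (hα1 : α ≤ 1)
    {x y : E} (hxy : ‖y‖ ≤ ‖x‖) :
    ‖‖x‖ ^ (-α) • x - ‖y‖ ^ (-α) • y‖ ≤ 4 * ‖x - y‖ ^ (1 - α) := by
  rcases (norm_nonneg x).eq_or_lt with hx | hx
  · have hx0 : x = 0 := norm_eq_zero.1 hx.symm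
    have hy0 : y = 0 := norm_eq_zero.1 (le_antisymm (hx ▸ hxy) (norm_nonneg y))
    simp only [hx0, hy0, smul_zero, sub_self, norm_zero]
    positivity
  have h2α : (2 : ℝ) ^ α ≤ 2 := by simpa using rpow_le_rpow_of_exponent_le one_le_two hα1
  calc ‖‖x‖ ^ (-α) • x - ‖y‖ ^ (-α) • y‖
      ≤ ‖x‖ ^ (-α) * ‖x - y‖ + |‖x‖ ^ (-α) - ‖y‖ ^ (-α)| * ‖y‖ := by
        simpa only [abs_of_nonneg (rpow_nonneg hx.le _)] using
          norm_smul_sub_smul_le (‖x‖ ^ (-α)) (‖y‖ ^ (-α)) x y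
    _ ≤ 2 ^ α * ‖x - y‖ ^ (1 - α) + 2 * ‖x - y‖ ^ (1 - α) := by
        apply add_le_add
        · exact rpow_neg_mul_le hα0.le hx (norm_nonneg _) (by linarith [norm_sub_le x y])
        · exact abs_rpow_neg_sub_rpow_neg_mul_le hα0 hα1 (norm_nonneg y) hxy
            (norm_sub_norm_le x y)
    _ ≤ 4 * ‖x - y‖ ^ (1 - α) := by
        nlinarith [rpow_nonneg (norm_nonneg (x - y)) (1 - α)]

theorem norm_rpow_neg_smul_sub_rpow_neg_smul_le {α : ℝ} (hα0 : 0 < α) (hα1 : α ≤ 1) (x y : E) :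
    ‖‖x‖ ^ (-α) • x - ‖y‖ ^ (-α) • y‖ ≤ 4 * ‖x - y‖ ^ (1 - α) := by
  rcases le_total ‖y‖ ‖x‖ with hxy | hxy
  · exact norm_rpow_neg_smul_sub_rpow_neg_smul_le_of_norm_le hα0 hα1 hxy
  · rw [norm_sub_rev, norm_sub_rev x]
    exact norm_rpow_neg_smul_sub_rpow_neg_smul_le_of_norm_le hα0 hα1 hxy

end

-- The coefficient `a k` is the paper's `a_{k-1}`: `a 0` multiplies `r^{-α}`, `a 1` is the constant.
noncomputable def genPoly {N : ℕ} (α : ℝ) (e : Fin N → ℝ) (a : Fin (N + 2) → ℝ) (r : ℝ) : ℝ :=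
  a 0 * r ^ (-α) + a 1 + ∑ i : Fin N, a ⟨i + 2, by omega⟩ * r ^ e i

section
variable {N : ℕ} {α : ℝ} {e : Fin N → ℝ}

theorem genPoly_sub (a b : Fin (N + 2) → ℝ) (r : ℝ) :
    genPoly α e a r - genPoly α e b r = genPoly α e (a - b) r := by
  simp only [genPoly, Pi.sub_apply, sub_mul, sum_sub_distrib]
  ring

variable {E : Type*} [NormedAddCommGroup E] [NormedSpace ℝ E]

theorem genPoly_smul_sub_genPoly_smul (a : Fin (N + 2) → ℝ) (x y : E) :
    genPoly α e a ‖x‖ • x - genPoly α e a ‖y‖ • y =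
      a 0 • (‖x‖ ^ (-α) • x - ‖y‖ ^ (-α) • y) + a 1 • (x - y) +
        ∑ i : Fin N, a ⟨i + 2, by omega⟩ • (‖x‖ ^ e i • x - ‖y‖ ^ e i • y) := by
  simp only [genPoly, smul_sub, smul_smul, add_smul, sum_smul, sum_sub_distrib]
  abel

theorem norm_genPoly_smul_sub_genPoly_smul_le {A emax : ℝ} (hα0 : 0 < α) (hα1 : α ≤ 1)
    (he : ∀ i, 0 ≤ e i) (hemax : ∀ i, e i ≤ emax) (hemax0 : 0 ≤ emax)
    {a : Fin (N + 2) → ℝ} (ha : ∀ k, |a k| ≤ A) (x y : E) :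
    ‖genPoly α e a ‖x‖ • x - genPoly α e a ‖y‖ • y‖ ≤
      A * (5 + ∑ i, (1 + 2 * e i)) * (1 + ‖x‖ + ‖y‖) ^ (emax + α) * ‖x - y‖ ^ (1 - α) := by
  set R := 1 + ‖x‖ + ‖y‖
  set D := ‖x - y‖
  have hR : 1 ≤ R := by linarith [norm_nonneg x, norm_nonneg y]
  have hDR : D ≤ R := by linarith [norm_sub_le x y]
  have hA : 0 ≤ A := (abs_nonneg _).trans (ha 0)
  set T := R ^ (emax + α) * D ^ (1 - α)
  have hT : ∀ β ≤ emax, R ^ β * D ≤ T := fun β hβ =>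
    rpow_mul_le_rpow_add_mul_rpow hR (norm_nonneg _) hDR hα0.le hβ
  have hneg : ‖‖x‖ ^ (-α) • x - ‖y‖ ^ (-α) • y‖ ≤ 4 * T := by
    refine (norm_rpow_neg_smul_sub_rpow_neg_smul_le hα0 hα1 x y).trans ?_
    gcongr
    exact le_mul_of_one_le_left (rpow_nonneg (norm_nonneg _) _) (one_le_rpow hR (by linarith))
  have hconst : D ≤ T := by simpa using hT 0 hemax0
  have hpos : ∀ i, ‖‖x‖ ^ e i • x - ‖y‖ ^ e i • y‖ ≤ (1 + 2 * e i) * T := fun i => by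
    have hei := he i
    have hmax : max ‖x‖ ‖y‖ ≤ R :=
      max_le (by linarith [norm_nonneg y]) (by linarith [norm_nonneg x])
    calc _ ≤ (1 + 2 * e i) * max ‖x‖ ‖y‖ ^ e i * D := norm_rpow_smul_sub_rpow_smul_le (he i) x y
      _ ≤ (1 + 2 * e i) * (R ^ e i * D) := by
          rw [← mul_assoc]; gcongr
      _ ≤ (1 + 2 * e i) * T := by gcongr; exact hT _ (hemax i)
  rw [genPoly_smul_sub_genPoly_smul]
  calc _ ≤ |a 0| * ‖‖x‖ ^ (-α) • x - ‖y‖ ^ (-α) • y‖ + |a 1| * D +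
        ∑ i : Fin N, |a ⟨i + 2, by omega⟩| * ‖‖x‖ ^ e i • x - ‖y‖ ^ e i • y‖ := by
        refine (norm_add_le _ _).trans (add_le_add ((norm_add_le _ _).trans_eq ?_)
          ((norm_sum_le _ _).trans_eq ?_)) <;> simp only [norm_smul, Real.norm_eq_abs, D]
    _ ≤ A * (4 * T) + A * T + ∑ i : Fin N, A * ((1 + 2 * e i) * T) := by
        gcongr with i
        · exact ha _
        · exact ha _
        · exact ha _
        · exact hpos i
    _ = A * (5 + ∑ i, (1 + 2 * e i)) * R ^ (emax + α) * D ^ (1 - α) := by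
        rw [← mul_sum, ← sum_mul]; ring

theorem norm_genPoly_smul_le {B R emax : ℝ} (hα0 : 0 ≤ α) (hα1 : α ≤ 1) (he : ∀ i, 0 ≤ e i)
    (hemax : ∀ i, e i ≤ emax) (hemax0 : 0 ≤ emax) {a : Fin (N + 2) → ℝ} (ha : ∀ k, |a k| ≤ B)
    {y : E} (hyR : ‖y‖ ≤ R) (hR : 1 ≤ R) :
    ‖genPoly α e a ‖y‖ • y‖ ≤ (N + 2) * R ^ (emax + 1) * B := by
  have hy := norm_nonneg y
  have hB : 0 ≤ B := (abs_nonneg _).trans (ha 0)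
  have hpow : ∀ p, 0 ≤ p + 1 → p ≤ emax → ‖y‖ ^ p * ‖y‖ ≤ R ^ (emax + 1) := fun p hp hpe =>
    rpow_mul_le_rpow_of_le hy hyR hR hp (by linarith)
  have hconst : ‖y‖ ≤ R ^ (emax + 1) := by simpa using hpow 0 (by norm_num) hemax0
  have habs : |genPoly α e a ‖y‖| ≤
      |a 0| * ‖y‖ ^ (-α) + |a 1| + ∑ i : Fin N, |a ⟨i + 2, by omega⟩| * ‖y‖ ^ e i := by
    refine (abs_add_le _ _).trans (add_le_add ((abs_add_le _ _).trans_eq ?_)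
      ((abs_sum_le_sum_abs _ _).trans_eq ?_)) <;>
      simp only [abs_mul, abs_rpow_of_nonneg hy, abs_norm]
  rw [norm_smul, Real.norm_eq_abs]
  calc |genPoly α e a ‖y‖| * ‖y‖
      ≤ (|a 0| * ‖y‖ ^ (-α) + |a 1| + ∑ i : Fin N, |a ⟨i + 2, by omega⟩| * ‖y‖ ^ e i) * ‖y‖ := by
        gcongr
    _ = |a 0| * (‖y‖ ^ (-α) * ‖y‖) + |a 1| * ‖y‖ +
          ∑ i : Fin N, |a ⟨i + 2, by omega⟩| * (‖y‖ ^ e i * ‖y‖) := by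
        simp only [add_mul, sum_mul, mul_assoc]
    _ ≤ B * R ^ (emax + 1) + B * R ^ (emax + 1) + ∑ _i : Fin N, B * R ^ (emax + 1) := by
        gcongr with i
        · exact ha _
        · exact hpow _ (by linarith) (by linarith)
        · exact ha _
        · exact ha _
        · exact hpow _ (by linarith [he i]) (hemax i)
    _ = (N + 2) * R ^ (emax + 1) * B := by
        rw [sum_const, card_univ, Fintype.card_fin, nsmul_eq_mul]; ring

end

theorem stmt13 (d : ℕ) (N : ℕ) (hN : 1 ≤ N)
    (α : ℝ) (hα0 : 0 < α) (hα1 : α < 1)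
    (e : Fin N → ℝ) (hmono : StrictMono e) (hepos : ∀ i, 0 < e i)
    (astar asup : ℝ) (hstar : 0 < astar) (hstarsup : astar ≤ asup)
    (s : ℝ) (hs : s = e ⟨N - 1, by omega⟩ + 2) :
    ∃ K : ℝ, 0 < K ∧
      ∀ aa aa' : EuclideanSpace ℝ (Fin (N + 2)),
        (∀ i, 0 ≤ aa i ∧ aa i ≤ asup) → (∀ i, 0 ≤ aa' i ∧ aa' i ≤ asup) →
        astar ≤ aa 0 → astar ≤ aa 1 → astar ≤ aa ⟨N + 1, by omega⟩ →
        astar ≤ aa' 0 → astar ≤ aa' 1 → astar ≤ aa' ⟨N + 1, by omega⟩ →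
        ∀ x y : EuclideanSpace ℝ (Fin d),
          ‖(aa 0 * ‖x‖ ^ (-α) + aa 1 +
              ∑ i : Fin N, aa ⟨i.1 + 2, Nat.add_lt_add_right i.isLt 2⟩ * ‖x‖ ^ (e i)) • x -
            (aa' 0 * ‖y‖ ^ (-α) + aa' 1 +
              ∑ i : Fin N, aa' ⟨i.1 + 2, Nat.add_lt_add_right i.isLt 2⟩ * ‖y‖ ^ (e i)) • y‖ ≤
            2 * (s - 1) / (1 - α) * K * (1 + ‖x‖ + ‖y‖) ^ (s - 2 + α) * ‖x - y‖ ^ (1 - α) +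
              3 * (N : ℝ) * (1 + ‖x‖ + ‖y‖) ^ (s - 1) * ‖aa - aa'‖ := by
  set emax := e ⟨N - 1, by omega⟩
  have he : ∀ i, 0 ≤ e i := fun i => (hepos i).le
  have hemax : ∀ i, e i ≤ emax := fun i => hmono.monotone (Fin.le_def.2 (by simp; omega))
  set C := asup * (5 + ∑ i : Fin N, (1 + 2 * e i))
  have hsum : 0 ≤ ∑ i : Fin N, (1 + 2 * e i) := sum_nonneg fun i _ => by linarith [he i]
  have hC : 0 < C := mul_pos (hstar.trans_le hstarsup) (by linarith)
  have hs1 : 0 < s - 1 := by rw [hs]; linarith [hepos ⟨N - 1, by omega⟩]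
  refine ⟨C * (1 - α) / (2 * (s - 1)), div_pos (mul_pos hC (by linarith)) (by linarith), ?_⟩
  intro aa aa' haa _ _ _ _ _ _ _ x y
  have hK : 2 * (s - 1) / (1 - α) * (C * (1 - α) / (2 * (s - 1))) = C := by
    field_simp [hs1.ne', (by linarith : 1 - α ≠ 0)]
  rw [hK, show s - 2 + α = emax + α by rw [hs]; ring, show s - 1 = emax + 1 by rw [hs]; ring]
  have hN3 : (N : ℝ) + 2 ≤ 3 * N := by linarith [(Nat.one_le_cast.2 hN : (1 : ℝ) ≤ N)]
  change ‖genPoly α e aa ‖x‖ • x - genPoly α e aa' ‖y‖ • y‖ ≤ _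
  calc _ = ‖(genPoly α e aa ‖x‖ • x - genPoly α e aa ‖y‖ • y) +
        genPoly α e (aa - aa') ‖y‖ • y‖ := by
        rw [← genPoly_sub, sub_smul]; abel_nf
    _ ≤ C * (1 + ‖x‖ + ‖y‖) ^ (emax + α) * ‖x - y‖ ^ (1 - α) +
          (N + 2) * (1 + ‖x‖ + ‖y‖) ^ (emax + 1) * ‖aa - aa'‖ :=
        (norm_add_le _ _).trans (add_le_add
          (norm_genPoly_smul_sub_genPoly_smul_le hα0 hα1.le he hemax (he _)
            (fun k => abs_le.2 ⟨by linarith [(haa k).1], (haa k).2⟩) x y)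
          (norm_genPoly_smul_le hα0.le hα1.le he hemax (he _)
            (fun k => by simpa using PiLp.norm_apply_le (aa - aa') k)
            (by linarith [norm_nonneg x]) (by linarith [norm_nonneg x, norm_nonneg y])))
    _ ≤ _ := by gcongr
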